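/- arXiv:2205.11040 — 5 statements merged into one kernel-verified Lean document; each statement's English description precedes it below -/
import Mathlib

section
/- Let 0 < α < 1. Then there exists a constant C > 0, depending only on α, such that for all t > 0 and all w > 0 one has E_{α,1}(w t^α) ≤ C · exp(w^{1/α} · t). -/
/-- The two-parameter Mittag-Leffler function `E_{α,β}(x) = ∑ xᵏ / Γ(αk+β)` (real version). -/
noncomputable def mittagLeffler (α β x : ℝ) : ℝ :=
  ∑' k : ℕ, x ^ k / Real.Gamma (α * k + β)

/-!
Put `s = w^(1/α) t`, so that `w t^α = s^α`, and write `x = α k`, `n = ⌊x⌋₊`. Log-convexity of `Γ`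
gives `Γ(x + 2) ≥ (n + 1)! (n + 1)^(x - n)`, hence `s^x / Γ(x + 1) ≤ 2 (s^n / n! + s^(n+1) / (n+1)!)`.
At most `⌈α⁻¹⌉₊` indices `k` share the same `⌊α k⌋₊`, so summing over `k` gives
`E_α(s^α) ≤ 4 ⌈α⁻¹⌉₊ e^s`.
-/

open Real Finset Nat

theorem Real.Gamma_mul_rpow_le_Gamma_add {n : ℕ} (hn : 2 ≤ n) {θ : ℝ} (hθ : 0 ≤ θ) :
    Gamma n * ((n : ℝ) - 1) ^ θ ≤ Gamma (n + θ) := by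
  rcases hθ.eq_or_lt with rfl | hθ
  · simp
  have hn1 : (0 : ℝ) < n - 1 := by
    rw [sub_pos]; exact_mod_cast (by omega : 1 < n)
  have hlog := BohrMollerup.f_add_nat_ge convexOn_log_Gamma
    (fun {y} hy => by
      rw [Function.comp_apply, Gamma_add_one hy.ne', log_mul hy.ne' (Gamma_pos_of_pos hy).ne',
        add_comm, Function.comp_apply]) hn hθ
  have hΓn : 0 < Gamma n := Gamma_pos_of_pos (by linarith)
  rw [← log_le_log_iff (by positivity) (Gamma_pos_of_pos (by linarith)),
    log_mul hΓn.ne' (by positivity), log_rpow hn1]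
  exact hlog

theorem Real.rpow_le_one_add {a θ : ℝ} (ha : 0 ≤ a) (hθ₀ : 0 ≤ θ) (hθ₁ : θ ≤ 1) :
    a ^ θ ≤ 1 + a := by
  have := rpow_one_add_le_one_add_mul_self (s := a - 1) (by linarith) hθ₀ hθ₁
  rw [add_sub_cancel] at this
  nlinarith

theorem Real.rpow_div_Gamma_add_one_le {s x : ℝ} (hs : 0 < s) (hx : 0 ≤ x) :
    s ^ x / Gamma (x + 1) ≤
      2 * (s ^ ⌊x⌋₊ / (⌊x⌋₊ ! : ℝ) + s ^ (⌊x⌋₊ + 1) / ((⌊x⌋₊ + 1)! : ℝ)) := by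
  set n := ⌊x⌋₊
  set θ := x - n
  have hθ₀ : 0 ≤ θ := sub_nonneg.2 (Nat.floor_le hx)
  have hxn : x < n + 1 := Nat.lt_floor_add_one x
  have hθ₁ : θ ≤ 1 := by linarith
  have hΓx : 0 < Gamma (x + 1) := Gamma_pos_of_pos (by linarith)
  -- Bounding `Γ` at `x + 2` rather than `x + 1` keeps the base point `n + 2 ≥ 2`, so `n = 0` is covered.
  have hΓ : ((n + 1)! : ℝ) * ((n : ℝ) + 1) ^ θ ≤ (n + 2) * Gamma (x + 1) :=
    calc ((n + 1)! : ℝ) * ((n : ℝ) + 1) ^ θ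
        = Gamma ((n + 2 : ℕ) : ℝ) * (((n + 2 : ℕ) : ℝ) - 1) ^ θ := by
          rw [← Gamma_nat_eq_factorial]; push_cast; ring_nf
      _ ≤ Gamma ((n + 2 : ℕ) + θ) := Gamma_mul_rpow_le_Gamma_add (by omega) hθ₀
      _ = (x + 1) * Gamma (x + 1) := by
          rw [← Gamma_add_one (by linarith)]; congr 1; push_cast; ring
      _ ≤ (n + 2) * Gamma (x + 1) := mul_le_mul_of_nonneg_right (by linarith) hΓx.le
  have hsplit : s ^ x = s ^ n * s ^ θ := by
    rw [← rpow_natCast, ← rpow_add hs, add_sub_cancel]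
  calc s ^ x / Gamma (x + 1)
      = (n + 2) * s ^ x / ((n + 2) * Gamma (x + 1)) := by field_simp
    _ ≤ (n + 2) * s ^ x / ((n + 1)! * ((n : ℝ) + 1) ^ θ) := by gcongr
    _ = (n + 2) / (n + 1) * (s ^ n / n !) * (s / (n + 1)) ^ θ := by
        rw [hsplit, div_rpow hs.le (by positivity), Nat.factorial_succ]; push_cast
        field_simp
    _ ≤ 2 * (s ^ n / n !) * (1 + s / (n + 1)) := by
        gcongr
        · rw [div_le_iff₀ (by positivity)]; linarith
        · exact rpow_le_one_add (by positivity) hθ₀ hθ₁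
    _ = 2 * (s ^ n / n ! + s ^ (n + 1) / (n + 1)!) := by
        rw [Nat.factorial_succ]; push_cast; field_simp; ring

theorem card_filter_floor_mul_eq_le {α : ℝ} (hα : 0 < α) (A : Finset ℕ) (n : ℕ) :
    #(A.filter fun k : ℕ ↦ ⌊α * k⌋₊ = n) ≤ ⌈α⁻¹⌉₊ := by
  have hsub : (A.filter fun k : ℕ ↦ ⌊α * k⌋₊ = n) ⊆ Ico ⌈n / α⌉₊ ⌈(n + 1) / α⌉₊ := by
    intro k hk
    obtain ⟨hnk, hkn⟩ := (Nat.floor_eq_iff (by positivity)).1 (mem_filter.1 hk).2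
    rw [mem_Ico, Nat.ceil_le, Nat.lt_ceil, div_le_iff₀ hα, lt_div_iff₀ hα]
    constructor <;> linarith
  calc #(A.filter fun k : ℕ ↦ ⌊α * k⌋₊ = n) ≤ #(Ico ⌈n / α⌉₊ ⌈(n + 1) / α⌉₊) := card_le_card hsub
    _ ≤ ⌈α⁻¹⌉₊ := by
      have := Nat.ceil_add_le ((n : ℝ) / α) α⁻¹
      rw [Nat.card_Ico, add_div, one_div]; omega

theorem sum_comp_floor_mul_le {α : ℝ} (hα : 0 < α) {f : ℕ → ℝ} (hf : ∀ n, 0 ≤ f n)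
    (A : Finset ℕ) :
    ∑ k ∈ A, f ⌊α * k⌋₊ ≤ ⌈α⁻¹⌉₊ * ∑ n ∈ A.image (fun k : ℕ ↦ ⌊α * k⌋₊), f n := by
  rw [sum_comp, mul_sum]
  gcongr with n
  rw [nsmul_eq_mul]
  gcongr
  · exact hf n
  · exact_mod_cast card_filter_floor_mul_eq_le hα A n

theorem sum_pow_div_factorial_le_exp {s : ℝ} (hs : 0 ≤ s) (B : Finset ℕ) :
    ∑ n ∈ B, s ^ n / n ! ≤ exp s := by
  rw [exp_eq_exp_ℝ, NormedSpace.exp_eq_tsum_div]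
  exact (summable_pow_div_factorial s).sum_le_tsum B (fun _ _ ↦ by positivity)

theorem sum_pow_div_factorial_add_succ_le {s : ℝ} (hs : 0 ≤ s) (B : Finset ℕ) :
    ∑ n ∈ B, (s ^ n / n ! + s ^ (n + 1) / (n + 1)!) ≤ 2 * exp s := by
  rw [sum_add_distrib, two_mul]
  gcongr
  · exact sum_pow_div_factorial_le_exp hs B
  · simpa using sum_pow_div_factorial_le_exp hs (B.map (addRightEmbedding 1))

theorem mittagLeffler_rpow_le {α : ℝ} (hα : 0 < α) {s : ℝ} (hs : 0 < s) :
    mittagLeffler α 1 (s ^ α) ≤ 4 * ⌈α⁻¹⌉₊ * exp s := by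
  set f : ℕ → ℝ := fun k ↦ (s ^ α) ^ k / Gamma (α * k + 1)
  have hf : 0 ≤ f := fun k ↦ div_nonneg (by positivity) (Gamma_pos_of_pos (by positivity)).le
  set g : ℕ → ℝ := fun n ↦ s ^ n / n ! + s ^ (n + 1) / (n + 1)!
  have hfg (k : ℕ) : f k ≤ 2 * g ⌊α * k⌋₊ := by
    simp only [f, g]
    rw [← rpow_natCast (s ^ α), ← rpow_mul hs.le]
    exact rpow_div_Gamma_add_one_le hs (by positivity)
  have hpartial (A : Finset ℕ) : ∑ k ∈ A, f k ≤ 4 * ⌈α⁻¹⌉₊ * exp s :=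
    calc ∑ k ∈ A, f k ≤ 2 * ∑ k ∈ A, g ⌊α * k⌋₊ := by
          rw [mul_sum]; exact sum_le_sum fun k _ ↦ hfg k
      _ ≤ 2 * (⌈α⁻¹⌉₊ * (2 * exp s)) := by
          gcongr
          exact (sum_comp_floor_mul_le hα (fun n ↦ by positivity) A).trans
            (by gcongr; exact sum_pow_div_factorial_add_succ_le hs.le _)
      _ = 4 * ⌈α⁻¹⌉₊ * exp s := by ring
  exact Real.tsum_le_of_sum_le hf hpartial

theorem stmt1_general (α : ℝ) (hα0 : 0 < α) :
    ∃ C : ℝ, 0 < C ∧ ∀ t w : ℝ, 0 < t → 0 < w →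
      mittagLeffler α 1 (w * t ^ α) ≤ C * Real.exp (w ^ (1 / α) * t) := by
  refine ⟨4 * ⌈α⁻¹⌉₊, by positivity, fun t w ht hw ↦ ?_⟩
  have hscale : w * t ^ α = (w ^ (1 / α) * t) ^ α := by
    rw [mul_rpow (by positivity) ht.le, ← rpow_mul hw.le, one_div_mul_cancel hα0.ne', rpow_one]
  rw [hscale]
  exact mittagLeffler_rpow_le hα0 (by positivity)

theorem stmt1 (α : ℝ) (hα0 : 0 < α) (hα1 : α < 1) :
    ∃ C : ℝ, 0 < C ∧ ∀ t w : ℝ, 0 < t → 0 < w →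
      mittagLeffler α 1 (w * t ^ α) ≤ C * Real.exp (w ^ (1 / α) * t) :=
  stmt1_general α hα0
end

section
/- Let 0 < α < 1, T > 0, and let v : [0, T] → ℝ be continuous with v' ∈ L¹(0, T), and assume v is monotone on [0, T]. Then for every t ∈ (0, T] one has v(t) · D^α v(t) ≥ (1/2) · D^α (v²)(t), where v² denotes the function t ↦ v(t)². -/
open MeasureTheory

/-- The (left) Caputo fractional derivative of order `α` of `u : ℝ → ℝ`:
`D^α u (t) = (1/Γ(1-α)) ∫₀ᵗ (t-s)^(-α) u'(s) ds`. -/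
noncomputable def caputoDeriv (α : ℝ) (u : ℝ → ℝ) (t : ℝ) : ℝ :=
  (1 / Real.Gamma (1 - α)) * ∫ s in Set.Ioo 0 t, (t - s) ^ (-α) * deriv u s

/-!
For monotone `v` we have `v' ≥ 0` and, almost everywhere, `(v²)' = 2 v v'`; since `v ≤ v t` on
`(0, t)` and the kernel `(t - s)^(-α)` is nonnegative, integrating gives the inequality. The only
subtlety is the convention that a non-integrable integrand has integral `0`. If `(t - s)^(-α) v'`
is not integrable on `(0, t)`, then either `v ≤ 0` there, so the left-hand integrand is `≤ 0`, or
`v ≥ v c > 0` on `(c, t)`; then integrability of `(t - s)^(-α) v v'` would force that of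
`(t - s)^(-α) v'` (the kernel is bounded on `[0, c]`), so both integrals vanish.
The antitone case follows by applying the monotone one to `-v`.
-/

open Set

section
variable {a b : ℝ} {v : ℝ → ℝ}

lemma MonotoneOn.deriv_nonneg_of_mem_Ioo (hv : MonotoneOn v (Icc a b)) {x : ℝ}
    (hx : x ∈ Ioo a b) : 0 ≤ deriv v x := by
  rw [← derivWithin_of_mem_nhds (Icc_mem_nhds hx.1 hx.2)]
  exact hv.derivWithin_nonneg

lemma MonotoneOn.ae_differentiableAt_of_mem_Ioo (hv : MonotoneOn v (Icc a b)) :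
    ∀ᵐ x, x ∈ Ioo a b → DifferentiableAt ℝ v x := by
  filter_upwards [hv.ae_differentiableWithinAt_of_mem] with x hx hxab
  exact (hx (Ioo_subset_Icc_self hxab)).differentiableAt (Icc_mem_nhds hxab.1 hxab.2)

lemma IntegrableOn.of_mul_of_le_abs {f g : ℝ → ℝ} {s : Set ℝ} {c : ℝ} (hc : 0 < c)
    (hs : MeasurableSet s) (hfg : IntegrableOn (fun x => f x * g x) s)
    (hg : AEStronglyMeasurable g (volume.restrict s)) (hf : ∀ x ∈ s, c ≤ |f x|) :
    IntegrableOn g s := by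
  refine (hfg.norm.const_mul c⁻¹).mono' hg ?_
  filter_upwards [ae_restrict_mem hs] with x hx
  rw [norm_mul, le_inv_mul_iff₀ hc, Real.norm_eq_abs]
  exact mul_le_mul_of_nonneg_right (hf x hx) (abs_nonneg _)

variable {k : ℝ → ℝ}

lemma MonotoneOn.integrableOn_mul_deriv_of_pos (hv : MonotoneOn v (Icc a b))
    (hk : ContinuousOn k (Ico a b)) (hint : IntegrableOn (deriv v) (Ioo a b))
    {c : ℝ} (hc : c ∈ Ioo a b) (hvc : 0 < v c)
    (hvg : IntegrableOn (fun s => v s * (k s * deriv v s)) (Ioo a b)) :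
    IntegrableOn (fun s => k s * deriv v s) (Ioo a b) := by
  have hg : AEStronglyMeasurable (fun s => k s * deriv v s) (volume.restrict (Ioo a b)) :=
    ((hk.mono Ioo_subset_Ico_self).aestronglyMeasurable measurableSet_Ioo).mul
      (measurable_deriv v).aestronglyMeasurable
  have hleft : IntegrableOn (fun s => k s * deriv v s) (Ioc a c) :=
    (hint.mono_set (Ioc_subset_Ioo_right hc.2)).continuousOn_mul_of_subset
      (hk.mono (Icc_subset_Ico_right hc.2)) isCompact_Icc measurableSet_Ioc Ioc_subset_Icc_self
  have hright : IntegrableOn (fun s => k s * deriv v s) (Ioo c b) :=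
    IntegrableOn.of_mul_of_le_abs hvc measurableSet_Ioo
      (hvg.mono_set (Ioo_subset_Ioo_left hc.1.le))
      (hg.mono_measure (Measure.restrict_mono (Ioo_subset_Ioo_left hc.1.le) le_rfl))
      fun s hs => (hv ⟨hc.1.le, hc.2.le⟩ ⟨hc.1.le.trans hs.1.le, hs.2.le⟩ hs.1.le).trans
        (le_abs_self _)
  refine (hleft.union hright).mono_set fun s hs => ?_
  rcases le_or_gt s c with hsc | hcs
  exacts [Or.inl ⟨hs.1, hsc⟩, Or.inr ⟨hcs, hs.2⟩]

lemma MonotoneOn.integral_mul_deriv_sq_le (hv : MonotoneOn v (Icc a b))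
    (hk0 : ∀ s ∈ Ioo a b, 0 ≤ k s) (hk : ContinuousOn k (Ico a b))
    (hint : IntegrableOn (deriv v) (Ioo a b)) :
    ∫ s in Ioo a b, k s * deriv (fun x => v x ^ 2) s ≤
      2 * v b * ∫ s in Ioo a b, k s * deriv v s := by
  have hvb : ∀ s ∈ Ioo a b, v s ≤ v b := fun s hs =>
    hv (Ioo_subset_Icc_self hs) (right_mem_Icc.2 (hs.1.trans hs.2).le) hs.2.le
  have hg0 : ∀ s ∈ Ioo a b, 0 ≤ k s * deriv v s := fun s hs =>
    mul_nonneg (hk0 s hs) (hv.deriv_nonneg_of_mem_Ioo hs)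
  have hsq : ∀ᵐ s ∂volume.restrict (Ioo a b),
      k s * deriv (fun x => v x ^ 2) s = 2 * (v s * (k s * deriv v s)) := by
    rw [ae_restrict_iff' measurableSet_Ioo]
    filter_upwards [hv.ae_differentiableAt_of_mem_Ioo] with s hd hs
    rw [deriv_fun_pow (hd hs) 2]
    ring
  by_cases hg : IntegrableOn (fun s => k s * deriv v s) (Ioo a b)
  · have hvg : IntegrableOn (fun s => v s * (k s * deriv v s)) (Ioo a b) := by
      refine hg.bdd_mul (c := max |v a| |v b|) (aemeasurable_restrict_of_monotoneOn
        measurableSet_Ioo (hv.mono Ioo_subset_Icc_self)).aestronglyMeasurable ?_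
      filter_upwards [ae_restrict_mem measurableSet_Ioo] with s hs
      exact abs_le_max_abs_abs
        (hv (left_mem_Icc.2 (hs.1.trans hs.2).le) (Ioo_subset_Icc_self hs) hs.1.le) (hvb s hs)
    calc ∫ s in Ioo a b, k s * deriv (fun x => v x ^ 2) s
        = 2 * ∫ s in Ioo a b, v s * (k s * deriv v s) := by
          rw [integral_congr_ae hsq, integral_const_mul]
      _ ≤ 2 * ∫ s in Ioo a b, v b * (k s * deriv v s) := by
          refine mul_le_mul_of_nonneg_left ?_ zero_le_two
          exact setIntegral_mono_on hvg (hg.const_mul _) measurableSet_Ioo fun s hs =>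
            mul_le_mul_of_nonneg_right (hvb s hs) (hg0 s hs)
      _ = 2 * v b * ∫ s in Ioo a b, k s * deriv v s := by
          rw [integral_const_mul, mul_assoc]
  rw [integral_undef hg, mul_zero]
  by_cases hpos : ∃ c ∈ Ioo a b, 0 < v c
  · obtain ⟨c, hc, hvc⟩ := hpos
    refine (integral_undef fun hF => hg (hv.integrableOn_mul_deriv_of_pos hk hint hc hvc ?_)).le
    exact (integrable_const_mul_iff (isUnit_iff_ne_zero.2 two_ne_zero) _).1 (hF.congr hsq)
  push Not at hpos
  refine integral_nonpos_of_ae ?_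
  filter_upwards [hsq, ae_restrict_mem measurableSet_Ioo] with s hs hmem
  rw [Pi.zero_apply, hs]
  nlinarith [mul_nonpos_of_nonpos_of_nonneg (hpos s hmem) (hg0 s hmem)]

end

lemma caputoDeriv_neg (α : ℝ) (u : ℝ → ℝ) (t : ℝ) :
    caputoDeriv α (fun s => -u s) t = -caputoDeriv α u t := by
  simp only [caputoDeriv, deriv.fun_neg, mul_neg, integral_neg]

lemma half_caputoDeriv_sq_le_of_monotoneOn {α t : ℝ} {v : ℝ → ℝ} (hα : α < 1)
    (hv : MonotoneOn v (Icc 0 t)) (hint : IntegrableOn (deriv v) (Ioo 0 t)) :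
    1 / 2 * caputoDeriv α (fun s => v s ^ 2) t ≤ v t * caputoDeriv α v t := by
  have hΓ : 0 ≤ 1 / Real.Gamma (1 - α) := (one_div_pos.2 (Real.Gamma_pos_of_pos (by linarith))).le
  have hkernel := hv.integral_mul_deriv_sq_le (k := fun s => (t - s) ^ (-α))
    (fun s hs => Real.rpow_nonneg (sub_nonneg.2 hs.2.le) _)
    (fun s hs => (continuousAt_const.sub continuousAt_id).rpow_const
      (Or.inl (sub_ne_zero.2 hs.2.ne')) |>.continuousWithinAt) hint
  unfold caputoDeriv
  nlinarith [mul_le_mul_of_nonneg_left hkernel hΓ]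

theorem stmt4_general (α T : ℝ) (hα1 : α < 1)
    (v : ℝ → ℝ)
    (hint : IntegrableOn (deriv v) (Set.Ioo 0 T))
    (hmono : MonotoneOn v (Set.Icc 0 T) ∨ AntitoneOn v (Set.Icc 0 T)) :
    ∀ t ∈ Set.Ioc 0 T,
      (1 / 2) * caputoDeriv α (fun s => (v s) ^ 2) t ≤ v t * caputoDeriv α v t := by
  intro t ⟨_, htT⟩
  have hint_t := hint.mono_set (Ioo_subset_Ioo_right htT)
  rcases hmono with hv | hv
  · exact half_caputoDeriv_sq_le_of_monotoneOn hα1 (hv.mono (Icc_subset_Icc_right htT)) hint_t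
  · have h := half_caputoDeriv_sq_le_of_monotoneOn (v := fun s => -v s) hα1
      (hv.mono (Icc_subset_Icc_right htT)).neg (by rw [deriv.fun_neg']; exact hint_t.neg)
    simpa only [neg_sq, caputoDeriv_neg, neg_mul_neg] using h

theorem stmt4 (α T : ℝ) (hα0 : 0 < α) (hα1 : α < 1) (hT : 0 < T)
    (v : ℝ → ℝ) (hc : ContinuousOn v (Set.Icc 0 T))
    (hint : IntegrableOn (deriv v) (Set.Ioo 0 T))
    (hmono : MonotoneOn v (Set.Icc 0 T) ∨ AntitoneOn v (Set.Icc 0 T)) :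
    ∀ t ∈ Set.Ioc 0 T,
      (1 / 2) * caputoDeriv α (fun s => (v s) ^ 2) t ≤ v t * caputoDeriv α v t :=
  stmt4_general α T hα1 v hint hmono
end

section
/- Let 0 < α < 1, T > 0, let n ≥ 2 be an integer, and let u : [0, T] → ℝ be continuous, nonnegative and monotone with u' ∈ L¹(0, T). Then for every t ∈ (0, T] one has u(t)^{n-1} · D^α u(t) ≥ (1/n) · D^α (uⁿ)(t), where uⁿ denotes the function t ↦ u(t)ⁿ. -/
/-!
Wherever `u` is differentiable, `(uⁿ)' = n u^(n-1) u'`. For `s < t` the sign of `u'(s)` is the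
one that makes `u(s)^(n-1) u'(s) ≤ u(t)^(n-1) u'(s)` (`u' ≥ 0` and `u(s) ≤ u(t)` when `u` is
monotone, both reversed when it is antitone); multiplying by the positive kernel `(t - s)^(-α)`
and integrating gives the inequality.

The care needed is for a divergent integral `∫ (t - s)^(-α) u'(s) ds`, which Lean reads as `0`.
If `n u(t)^(n-1) = 0`, the integrand of `D^α (uⁿ)` is then a.e. nonpositive. Otherwise
`n u^(n-1)` stays away from `0` near `s = t` by continuity, while the kernel is bounded away from
`s = t`, so `∫ (t - s)^(-α) (uⁿ)'(s) ds` diverges too and is also read as `0`.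
-/

open MeasureTheory

open Set Filter Topology

theorem AntitoneOn.ae_differentiableWithinAt_of_mem {f : ℝ → ℝ} {s : Set ℝ}
    (hf : AntitoneOn f s) : ∀ᵐ x, x ∈ s → DifferentiableWithinAt ℝ f s x := by
  filter_upwards [hf.neg.ae_differentiableWithinAt_of_mem] with x hx hxs
  simpa using (hx hxs).neg

theorem MonotoneOn.deriv_nonneg_of_mem_nhds {f : ℝ → ℝ} {s : Set ℝ} {x : ℝ}
    (hf : MonotoneOn f s) (hs : s ∈ 𝓝 x) : 0 ≤ deriv f x := by
  rw [← derivWithin_of_mem_nhds hs]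
  exact hf.derivWithin_nonneg

theorem AntitoneOn.deriv_nonpos_of_mem_nhds {f : ℝ → ℝ} {s : Set ℝ} {x : ℝ}
    (hf : AntitoneOn f s) (hs : s ∈ 𝓝 x) : deriv f x ≤ 0 := by
  rw [← derivWithin_of_mem_nhds hs]
  exact hf.derivWithin_nonpos

section MonotoneOrAntitone

variable {u : ℝ → ℝ} {a b : ℝ}

theorem deriv_pow_ae_eq_of_monotoneOn_or_antitoneOn (n : ℕ)
    (hmono : MonotoneOn u (Icc a b) ∨ AntitoneOn u (Icc a b)) :
    ∀ᵐ x, x ∈ Ioo a b → deriv (fun y => u y ^ n) x = n * u x ^ (n - 1) * deriv u x := by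
  have hdiff : ∀ᵐ x, x ∈ Icc a b → DifferentiableWithinAt ℝ u (Icc a b) x := by
    rcases hmono with hm | hm
    · exact hm.ae_differentiableWithinAt_of_mem
    · exact hm.ae_differentiableWithinAt_of_mem
  filter_upwards [hdiff] with x hx hxab
  have hd : DifferentiableAt ℝ u x :=
    (hx (Ioo_subset_Icc_self hxab)).differentiableAt (Icc_mem_nhds hxab.1 hxab.2)
  exact (hd.hasDerivAt.pow n).deriv

theorem pow_mul_deriv_le_of_monotoneOn_or_antitoneOn (m : ℕ)
    (hmono : MonotoneOn u (Icc a b) ∨ AntitoneOn u (Icc a b))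
    (hnn : ∀ x ∈ Icc a b, 0 ≤ u x) {s t : ℝ} (hs : s ∈ Ioo a b) (ht : t ∈ Icc a b)
    (hst : s ≤ t) : u s ^ m * deriv u s ≤ u t ^ m * deriv u s := by
  have hs_nhds : Icc a b ∈ 𝓝 s := Icc_mem_nhds hs.1 hs.2
  have hs' : s ∈ Icc a b := Ioo_subset_Icc_self hs
  rcases hmono with hm | hm
  · exact mul_le_mul_of_nonneg_right (pow_le_pow_left₀ (hnn s hs') (hm hs' ht hst) m)
      (hm.deriv_nonneg_of_mem_nhds hs_nhds)
  · exact mul_le_mul_of_nonpos_right (pow_le_pow_left₀ (hnn t ht) (hm hs' ht hst) m)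
      (hm.deriv_nonpos_of_mem_nhds hs_nhds)

end MonotoneOrAntitone

theorem integrableOn_Ioo_of_integrableOn_mul {w g : ℝ → ℝ} {a t : ℝ} (hat : a < t)
    (hw : ContinuousWithinAt w (Ioo a t) t) (hwt : w t ≠ 0)
    (hg_meas : AEStronglyMeasurable g (volume.restrict (Ioo a t)))
    (hg : ∀ r < t, IntegrableOn g (Ioc a r))
    (hwg : IntegrableOn (fun x => w x * g x) (Ioo a t)) : IntegrableOn g (Ioo a t) := by
  have hnear : ∀ᶠ x in 𝓝[<] t, |w t| / 2 < |w x| := by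
    rw [← nhdsWithin_Ioo_eq_nhdsLT hat]
    exact hw.abs.eventually (lt_mem_nhds (half_lt_self (abs_pos.2 hwt)))
  obtain ⟨l, hlt, hl⟩ := mem_nhdsLT_iff_exists_Ioo_subset.1 hnear
  set r := max a l
  have hrt : r < t := max_lt hat hlt
  have hrt_sub : Ioo r t ⊆ Ioo a t := Ioo_subset_Ioo_left (le_max_left a l)
  have hclose : IntegrableOn g (Ioo r t) := by
    refine Integrable.mono' ((hwg.mono_set hrt_sub).norm.const_mul (2 / |w t|))
      (hg_meas.mono_set hrt_sub) ?_
    filter_upwards [ae_restrict_mem measurableSet_Ioo] with x hx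
    have hwx : |w t| / 2 < |w x| := hl (Ioo_subset_Ioo_left (le_max_right a l) hx)
    rw [Real.norm_eq_abs, Real.norm_eq_abs, abs_mul, div_mul_eq_mul_div,
      le_div_iff₀ (abs_pos.2 hwt)]
    nlinarith [mul_le_mul_of_nonneg_left hwx.le (abs_nonneg (g x))]
  exact ((hg r hrt).union hclose).mono_set fun x hx =>
    (le_or_gt x r).imp (fun h => ⟨hx.1, h⟩) (fun h => ⟨h, hx.2⟩)

theorem continuousOn_sub_rpow (α t : ℝ) : ContinuousOn (fun s : ℝ => (t - s) ^ α) (Iio t) :=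
  (continuousOn_const.sub continuousOn_id).rpow_const fun _ hs => Or.inl (sub_pos.2 hs).ne'

theorem IntegrableOn.sub_rpow_neg_mul {α a r t : ℝ} {v : ℝ → ℝ} (hα : 0 ≤ α) (hrt : r < t)
    (hv : IntegrableOn v (Ioc a r)) : IntegrableOn (fun s => (t - s) ^ (-α) * v s) (Ioc a r) := by
  refine hv.bdd_mul (c := (t - r) ^ (-α))
    (((continuousOn_sub_rpow _ t).mono fun s hs => hs.2.trans_lt hrt).aestronglyMeasurable
      measurableSet_Ioc) ?_
  filter_upwards [ae_restrict_mem measurableSet_Ioc] with s hs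
  rw [Real.norm_of_nonneg (Real.rpow_nonneg (by linarith [hs.2]) _)]
  exact Real.rpow_le_rpow_of_nonpos (by linarith) (by linarith [hs.2]) (by linarith)

theorem integral_sub_rpow_mul_deriv_pow_le {α a b t : ℝ} {n : ℕ} {u : ℝ → ℝ} (hα : 0 ≤ α)
    (hc : ContinuousOn u (Icc a b)) (hnn : ∀ x ∈ Icc a b, 0 ≤ u x)
    (hint : IntegrableOn (deriv u) (Ioo a b))
    (hmono : MonotoneOn u (Icc a b) ∨ AntitoneOn u (Icc a b)) (ht : t ∈ Ioc a b) :
    ∫ s in Ioo a t, (t - s) ^ (-α) * deriv (fun x => u x ^ n) s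
      ≤ n * u t ^ (n - 1) * ∫ s in Ioo a t, (t - s) ^ (-α) * deriv u s := by
  set g := fun s => (t - s) ^ (-α) * deriv u s
  set w := fun s => n * u s ^ (n - 1)
  have hIcc : Icc a t ⊆ Icc a b := Icc_subset_Icc_right ht.2
  have hIoo : Ioo a t ⊆ Ioo a b := Ioo_subset_Ioo_right ht.2
  have hw : ContinuousOn w (Icc a t) := continuousOn_const.mul ((hc.mono hIcc).pow _)
  have hfwg : (fun s => (t - s) ^ (-α) * deriv (fun x => u x ^ n) s)
      =ᵐ[volume.restrict (Ioo a t)] fun s => w s * g s := by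
    filter_upwards [ae_restrict_of_ae (deriv_pow_ae_eq_of_monotoneOn_or_antitoneOn n hmono),
      ae_restrict_mem measurableSet_Ioo] with s hs hst
    rw [hs (hIoo hst)]
    ring
  have hle : ∀ᵐ s ∂(volume.restrict (Ioo a t)), w s * g s ≤ w t * g s := by
    filter_upwards [ae_restrict_mem measurableSet_Ioo] with s hs
    have hker : 0 ≤ (t - s) ^ (-α) := Real.rpow_nonneg (sub_nonneg.2 hs.2.le) _
    have := pow_mul_deriv_le_of_monotoneOn_or_antitoneOn (n - 1) hmono hnn (hIoo hs)
      ⟨ht.1.le, ht.2⟩ hs.2.le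
    simp only [w, g]
    nlinarith [mul_le_mul_of_nonneg_left this (mul_nonneg (Nat.cast_nonneg n) hker)]
  rw [integral_congr_ae hfwg]
  by_cases hg : IntegrableOn g (Ioo a t)
  · calc ∫ s in Ioo a t, w s * g s
        ≤ ∫ s in Ioo a t, w t * g s :=
          integral_mono_ae (hg.continuousOn_mul_of_subset hw isCompact_Icc measurableSet_Ioo
            Ioo_subset_Icc_self) (hg.const_mul _) hle
      _ = w t * ∫ s in Ioo a t, g s := integral_const_mul _ _
  rw [integral_undef hg, mul_zero]
  by_cases hwt : w t = 0
  · refine integral_nonpos_of_ae ?_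
    filter_upwards [hle] with s hs
    simpa [hwt] using hs
  have hwg : ¬ IntegrableOn (fun s => w s * g s) (Ioo a t) := by
    refine fun hwg => hg (integrableOn_Ioo_of_integrableOn_mul ht.1
      ((hw t ⟨ht.1.le, le_rfl⟩).mono Ioo_subset_Icc_self) hwt ?_ ?_ hwg)
    · exact (((continuousOn_sub_rpow _ t).mono fun s hs => hs.2).aestronglyMeasurable
        measurableSet_Ioo).mul (measurable_deriv u).aestronglyMeasurable
    · exact fun r hrt => IntegrableOn.sub_rpow_neg_mul hα hrt
        (hint.mono_set fun s hs => ⟨hs.1, hs.2.trans_lt (hrt.trans_le ht.2)⟩)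
  rw [integral_undef hwg]

theorem stmt5_general (α T : ℝ) (hα0 : 0 < α) (hα1 : α < 1)
    (n : ℕ) (hn : 2 ≤ n)
    (u : ℝ → ℝ) (hc : ContinuousOn u (Set.Icc 0 T))
    (hnn : ∀ t ∈ Set.Icc 0 T, 0 ≤ u t)
    (hint : IntegrableOn (deriv u) (Set.Ioo 0 T))
    (hmono : MonotoneOn u (Set.Icc 0 T) ∨ AntitoneOn u (Set.Icc 0 T)) :
    ∀ t ∈ Set.Ioc 0 T,
      (1 / (n : ℝ)) * caputoDeriv α (fun s => (u s) ^ n) t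
        ≤ (u t) ^ (n - 1) * caputoDeriv α u t := by
  intro t ht
  have hΓ : 0 ≤ 1 / Real.Gamma (1 - α) :=
    one_div_nonneg.2 (Real.Gamma_pos_of_pos (sub_pos.2 hα1)).le
  have hn0 : (0 : ℝ) < n := by exact_mod_cast (by omega : 0 < n)
  have key := integral_sub_rpow_mul_deriv_pow_le (n := n) hα0.le hc hnn hint hmono ht
  unfold caputoDeriv
  calc (1 / (n : ℝ)) * ((1 / Real.Gamma (1 - α)) *
          ∫ s in Ioo 0 t, (t - s) ^ (-α) * deriv (fun x => u x ^ n) s)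
      ≤ (1 / (n : ℝ)) * ((1 / Real.Gamma (1 - α)) *
          (n * u t ^ (n - 1) * ∫ s in Ioo 0 t, (t - s) ^ (-α) * deriv u s)) := by gcongr
    _ = u t ^ (n - 1) * ((1 / Real.Gamma (1 - α)) *
          ∫ s in Ioo 0 t, (t - s) ^ (-α) * deriv u s) := by field_simp

theorem stmt5 (α T : ℝ) (hα0 : 0 < α) (hα1 : α < 1) (hT : 0 < T)
    (n : ℕ) (hn : 2 ≤ n)
    (u : ℝ → ℝ) (hc : ContinuousOn u (Set.Icc 0 T))
    (hnn : ∀ t ∈ Set.Icc 0 T, 0 ≤ u t)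
    (hint : IntegrableOn (deriv u) (Set.Ioo 0 T))
    (hmono : MonotoneOn u (Set.Icc 0 T) ∨ AntitoneOn u (Set.Icc 0 T)) :
    ∀ t ∈ Set.Ioc 0 T,
      (1 / (n : ℝ)) * caputoDeriv α (fun s => (u s) ^ n) t
        ≤ (u t) ^ (n - 1) * caputoDeriv α u t :=
  stmt5_general α T hα0 hα1 n hn u hc hnn hint hmono
end

section
/- Let 0 < α < 1, T > 0 and let b, c₁ > 0 be constants. Suppose y : [0, T] → ℝ is nonnegative, absolutely continuous, and satisfies D^α y(t) + c₁ y(t) ≤ b for almost every t ∈ [0, T]. Then for every t ∈ [0, T], y(t) ≤ y(0) + b T^α / (α Γ(α)). -/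
/-!
Integrating the Caputo derivative against the Riemann–Liouville kernel `(t - s)^(α-1)` undoes
it: by Fubini and the Beta integral `∫ᵣᵗ (t-s)^(α-1) (s-r)^(-α) ds = Γ(α) Γ(1-α)`,
`∫₀ᵗ (t-s)^(α-1) D^α y(s) ds = Γ(α) (y t - y 0)`. Since `y ≥ 0` and `c₁ > 0`, the hypothesis
gives `D^α y ≤ b` almost everywhere, so `Γ(α) (y t - y 0) ≤ b ∫₀ᵗ (t-s)^(α-1) ds = b t^α / α`,
and `t^α ≤ T^α`.
-/

open MeasureTheory

/-- Absolute continuity of `f` on `[a, b]`, encoded via the fundamental theorem of calculus. -/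
def AbsContOn (f : ℝ → ℝ) (a b : ℝ) : Prop :=
  ContinuousOn f (Set.Icc a b) ∧ IntegrableOn (deriv f) (Set.Ioo a b) ∧
    ∀ x ∈ Set.Icc a b, f x = f a + ∫ s in Set.Ioo a x, deriv f s

open Set

theorem intervalIntegral_rpow_mul_one_sub_rpow {p q : ℝ} (hp : 0 < p) (hq : 0 < q) :
    ∫ x in (0 : ℝ)..1, x ^ (p - 1) * (1 - x) ^ (q - 1) = ProbabilityTheory.beta p q := by
  have hcast : ((∫ x in (0 : ℝ)..1, x ^ (p - 1) * (1 - x) ^ (q - 1) : ℝ) : ℂ) =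
      Complex.betaIntegral p q := by
    rw [Complex.betaIntegral, ← intervalIntegral.integral_ofReal]
    refine intervalIntegral.integral_congr fun x hx => ?_
    rw [uIcc_of_le zero_le_one] at hx
    simp only [Complex.ofReal_mul]
    rw [Complex.ofReal_cpow hx.1, Complex.ofReal_cpow (sub_nonneg.2 hx.2)]
    push_cast; rfl
  rw [ProbabilityTheory.beta_eq_betaIntegralReal p q hp hq, ← hcast, Complex.ofReal_re]

theorem integral_Ioo_sub_rpow_mul_sub_rpow {p q : ℝ} (hp : 0 < p) (hq : 0 < q) {a b : ℝ}
    (hab : a < b) :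
    ∫ s in Ioo a b, (b - s) ^ (p - 1) * (s - a) ^ (q - 1) =
      (b - a) ^ (p + q - 1) * ProbabilityTheory.beta q p := by
  have hc : 0 < b - a := sub_pos.2 hab
  have hsubst := intervalIntegral.integral_comp_mul_add (a := 0) (b := 1)
    (fun s => (b - s) ^ (p - 1) * (s - a) ^ (q - 1)) hc.ne' a
  have hscaled :
      ∫ x in (0 : ℝ)..1, (b - ((b - a) * x + a)) ^ (p - 1) * ((b - a) * x + a - a) ^ (q - 1) =
        (b - a) ^ (p + q - 2) * ProbabilityTheory.beta q p := by
    rw [← intervalIntegral_rpow_mul_one_sub_rpow hq hp, ← intervalIntegral.integral_const_mul]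
    refine intervalIntegral.integral_congr fun x hx => ?_
    rw [uIcc_of_le zero_le_one] at hx
    rw [show b - ((b - a) * x + a) = (b - a) * (1 - x) by ring, add_sub_cancel_right,
      Real.mul_rpow hc.le (sub_nonneg.2 hx.2), Real.mul_rpow hc.le hx.1,
      show p + q - 2 = (p - 1) + (q - 1) by ring, Real.rpow_add hc]
    ring
  rw [mul_zero, zero_add, mul_one, sub_add_cancel, hscaled, smul_eq_mul,
    eq_inv_mul_iff_mul_eq₀ hc.ne'] at hsubst
  rw [← integral_Ioc_eq_integral_Ioo, ← intervalIntegral.integral_of_le hab.le, ← hsubst,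
    show p + q - 1 = 1 + (p + q - 2) by ring, Real.rpow_add hc, Real.rpow_one, mul_assoc]

theorem integrableOn_sub_rpow_mul_sub_rpow {p q : ℝ} (hp : 0 < p) (hq : 0 < q) (a b : ℝ) :
    IntegrableOn (fun s => (b - s) ^ (p - 1) * (s - a) ^ (q - 1)) (Ioo a b) := by
  rcases lt_or_ge a b with hab | hba
  · refine Integrable.of_integral_ne_zero ?_
    rw [integral_Ioo_sub_rpow_mul_sub_rpow hp hq hab]
    have := ProbabilityTheory.beta_pos hq hp
    have := Real.rpow_pos_of_pos (sub_pos.2 hab) (p + q - 1)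
    positivity
  · rw [Ioo_eq_empty hba.not_gt]
    exact integrableOn_empty

theorem integral_Ioo_sub_rpow {p : ℝ} (hp : 0 < p) {a b : ℝ} (hab : a ≤ b) :
    ∫ s in Ioo a b, (b - s) ^ (p - 1) = (b - a) ^ p / p := by
  rw [← integral_Ioc_eq_integral_Ioo, ← intervalIntegral.integral_of_le hab,
    intervalIntegral.integral_comp_sub_left (fun x => x ^ (p - 1)) b, sub_self,
    integral_rpow (Or.inl (by linarith)), sub_add_cancel, Real.zero_rpow hp.ne', sub_zero]

theorem integrableOn_Ioo_sub_rpow {p : ℝ} (hp : 0 < p) (a b : ℝ) :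
    IntegrableOn (fun s => (b - s) ^ (p - 1)) (Ioo a b) := by
  simpa using integrableOn_sub_rpow_mul_sub_rpow hp one_pos a b

theorem integral_Ioo_sub_rpow_mul_sub_rpow_neg {α : ℝ} (hα0 : 0 < α) (hα1 : α < 1) {a b : ℝ}
    (hab : a < b) :
    ∫ s in Ioo a b, (b - s) ^ (α - 1) * (s - a) ^ (-α) = Real.Gamma α * Real.Gamma (1 - α) := by
  have h := integral_Ioo_sub_rpow_mul_sub_rpow hα0 (sub_pos.2 hα1) hab
  rwa [sub_sub_cancel_left, show α + (1 - α) - 1 = 0 by ring, Real.rpow_zero, one_mul,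
    ProbabilityTheory.beta, sub_add_cancel, Real.Gamma_one, div_one, mul_comm] at h

noncomputable def fractionalDoubleIntegrand (α a t : ℝ) (g : ℝ → ℝ) : ℝ × ℝ → ℝ :=
  {z : ℝ × ℝ | a < z.2 ∧ z.2 < z.1 ∧ z.1 < t}.indicator
    fun z => (t - z.1) ^ (α - 1) * ((z.1 - z.2) ^ (-α) * g z.2)

section FractionalFubini

variable {α a t : ℝ}

theorem fractionalDoubleIntegrand_apply_fst (g : ℝ → ℝ) (r : ℝ) :
    (fun s => fractionalDoubleIntegrand α a t g (s, r)) =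
      if r ∈ Ioo a t then (Ioo r t).indicator fun s => (t - s) ^ (α - 1) * (s - r) ^ (-α) * g r
      else 0 := by
  ext s
  simp only [fractionalDoubleIntegrand, indicator_apply, ite_apply, Pi.zero_apply, mem_Ioo,
    mem_ofPred_eq]
  split_ifs <;> first | (exfalso; grind) | ring

theorem fractionalDoubleIntegrand_apply_snd (g : ℝ → ℝ) (s : ℝ) :
    (fun r => fractionalDoubleIntegrand α a t g (s, r)) =
      if s ∈ Ioo a t then (Ioo a s).indicator fun r => (t - s) ^ (α - 1) * ((s - r) ^ (-α) * g r)
      else 0 := by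
  ext r
  simp only [fractionalDoubleIntegrand, indicator_apply, ite_apply, Pi.zero_apply, mem_Ioo,
    mem_ofPred_eq]
  split_ifs <;> first | (exfalso; grind) | rfl

theorem integral_fractionalDoubleIntegrand_fst (hα0 : 0 < α) (hα1 : α < 1) (g : ℝ → ℝ) (r : ℝ) :
    ∫ s, fractionalDoubleIntegrand α a t g (s, r) =
      (Ioo a t).indicator (fun r => Real.Gamma α * Real.Gamma (1 - α) * g r) r := by
  rw [fractionalDoubleIntegrand_apply_fst]
  by_cases hr : r ∈ Ioo a t
  · rw [if_pos hr, indicator_of_mem hr, integral_indicator measurableSet_Ioo, integral_mul_const,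
      integral_Ioo_sub_rpow_mul_sub_rpow_neg hα0 hα1 hr.2]
  · simp [hr]

theorem integral_fractionalDoubleIntegrand_snd (g : ℝ → ℝ) (s : ℝ) :
    ∫ r, fractionalDoubleIntegrand α a t g (s, r) =
      (Ioo a t).indicator
        (fun s => (t - s) ^ (α - 1) * ∫ r in Ioo a s, (s - r) ^ (-α) * g r) s := by
  rw [fractionalDoubleIntegrand_apply_snd]
  by_cases hs : s ∈ Ioo a t
  · rw [if_pos hs, indicator_of_mem hs, integral_indicator measurableSet_Ioo, integral_const_mul]
  · simp [hs]

theorem norm_fractionalDoubleIntegrand (g : ℝ → ℝ) (z : ℝ × ℝ) :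
    ‖fractionalDoubleIntegrand α a t g z‖ = fractionalDoubleIntegrand α a t (‖g ·‖) z := by
  rw [fractionalDoubleIntegrand, norm_indicator_eq_indicator_norm]
  refine congrFun (indicator_congr fun z hz => ?_) z
  have h1 : 0 ≤ (t - z.1) ^ (α - 1) := Real.rpow_nonneg (sub_nonneg.2 hz.2.2.le) _
  have h2 : 0 ≤ (z.1 - z.2) ^ (-α) := Real.rpow_nonneg (sub_nonneg.2 hz.2.1.le) _
  rw [norm_mul, norm_mul, Real.norm_of_nonneg h1, Real.norm_of_nonneg h2]

theorem integrable_fractionalDoubleIntegrand (hα0 : 0 < α) (hα1 : α < 1) {g : ℝ → ℝ}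
    (hg : IntegrableOn g (Ioo a t)) :
    Integrable (fractionalDoubleIntegrand α a t g) (volume.prod volume) := by
  have hmeas : AEStronglyMeasurable (fractionalDoubleIntegrand α a t g) (volume.prod volume) := by
    -- `g` is only known to be a.e.-measurable on `Ioo a t`, so pass to its extension by zero
    have hcongr : fractionalDoubleIntegrand α a t g =
        fractionalDoubleIntegrand α a t ((Ioo a t).indicator g) :=
      indicator_congr fun z hz => by
        rw [indicator_of_mem (show z.2 ∈ Ioo a t from ⟨hz.1, hz.2.1.trans hz.2.2⟩)]
    rw [hcongr]
    refine AEStronglyMeasurable.indicator ?_ ?_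
    · refine (Measurable.aestronglyMeasurable (by fun_prop)).mul
        ((Measurable.aestronglyMeasurable (by fun_prop)).mul ?_)
      exact ((integrable_indicator_iff measurableSet_Ioo).2 hg).aestronglyMeasurable.comp_snd
    · exact (measurableSet_lt measurable_const measurable_snd).inter
        ((measurableSet_lt measurable_snd measurable_fst).inter
          (measurableSet_lt measurable_fst measurable_const))
  refine (integrable_prod_iff' hmeas).2 ⟨Filter.Eventually.of_forall fun r => ?_, ?_⟩
  · rw [fractionalDoubleIntegrand_apply_fst]
    split_ifs with hr
    · refine (integrable_indicator_iff measurableSet_Ioo).2 (Integrable.mul_const ?_ _)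
      have h := integrableOn_sub_rpow_mul_sub_rpow hα0 (sub_pos.2 hα1) r t
      rwa [sub_sub_cancel_left] at h
    · exact integrable_zero _ _ _
  · simp_rw [norm_fractionalDoubleIntegrand, integral_fractionalDoubleIntegrand_fst hα0 hα1]
    exact (integrable_indicator_iff measurableSet_Ioo).2 (hg.norm.const_mul _)

theorem integral_sub_rpow_mul_integral_sub_rpow_neg (hα0 : 0 < α) (hα1 : α < 1) {g : ℝ → ℝ}
    (hg : IntegrableOn g (Ioo a t)) :
    IntegrableOn (fun s => (t - s) ^ (α - 1) * ∫ r in Ioo a s, (s - r) ^ (-α) * g r) (Ioo a t) ∧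
      ∫ s in Ioo a t, (t - s) ^ (α - 1) * ∫ r in Ioo a s, (s - r) ^ (-α) * g r =
        Real.Gamma α * Real.Gamma (1 - α) * ∫ r in Ioo a t, g r := by
  have hF := integrable_fractionalDoubleIntegrand hα0 hα1 hg
  constructor
  · have hint := hF.integral_prod_left
    simp_rw [integral_fractionalDoubleIntegrand_snd] at hint
    exact (integrable_indicator_iff measurableSet_Ioo).1 hint
  · have hswap :=
      integral_integral_swap (f := fun s r => fractionalDoubleIntegrand α a t g (s, r)) hF
    simp_rw [integral_fractionalDoubleIntegrand_snd,
      integral_fractionalDoubleIntegrand_fst hα0 hα1, integral_indicator measurableSet_Ioo,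
      integral_const_mul] at hswap
    exact hswap

end FractionalFubini

theorem AbsContOn.mono_right {f : ℝ → ℝ} {a b c : ℝ} (hf : AbsContOn f a b) (hcb : c ≤ b) :
    AbsContOn f a c :=
  ⟨hf.1.mono (Icc_subset_Icc_right hcb), hf.2.1.mono_set (Ioo_subset_Ioo_right hcb),
    fun x hx => hf.2.2 x (Icc_subset_Icc_right hcb hx)⟩

section Caputo

variable {α t : ℝ} {y : ℝ → ℝ}

theorem integral_sub_rpow_mul_caputoDeriv (hα0 : 0 < α) (hα1 : α < 1) (ht : 0 ≤ t)
    (hy : AbsContOn y 0 t) :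
    IntegrableOn (fun s => (t - s) ^ (α - 1) * caputoDeriv α y s) (Ioo 0 t) ∧
      ∫ s in Ioo 0 t, (t - s) ^ (α - 1) * caputoDeriv α y s = Real.Gamma α * (y t - y 0) := by
  obtain ⟨hint, hval⟩ := integral_sub_rpow_mul_integral_sub_rpow_neg hα0 hα1 hy.2.1
  have hΓ : Real.Gamma (1 - α) ≠ 0 := (Real.Gamma_pos_of_pos (sub_pos.2 hα1)).ne'
  have hD : (fun s => (t - s) ^ (α - 1) * caputoDeriv α y s) = fun s => (Real.Gamma (1 - α))⁻¹ *
      ((t - s) ^ (α - 1) * ∫ r in Ioo 0 s, (s - r) ^ (-α) * deriv y r) := by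
    ext s
    rw [caputoDeriv, one_div]
    ring
  have hFTC : ∫ r in Ioo 0 t, deriv y r = y t - y 0 :=
    eq_sub_of_add_eq' (hy.2.2 t ⟨ht, le_rfl⟩).symm
  rw [hD, integral_const_mul, hval, hFTC]
  refine ⟨hint.const_mul _, ?_⟩
  field_simp

theorem sub_le_of_caputoDeriv_le (hα0 : 0 < α) (hα1 : α < 1) (ht : 0 ≤ t)
    (hy : AbsContOn y 0 t) {b : ℝ} (hb : ∀ᵐ s ∂volume.restrict (Ioo 0 t), caputoDeriv α y s ≤ b) :
    y t - y 0 ≤ b * t ^ α / (α * Real.Gamma α) := by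
  obtain ⟨hint, hval⟩ := integral_sub_rpow_mul_caputoDeriv hα0 hα1 ht hy
  have hΓ : 0 < Real.Gamma α := Real.Gamma_pos_of_pos hα0
  have hbound : Real.Gamma α * (y t - y 0) ≤ b * t ^ α / α :=
    calc Real.Gamma α * (y t - y 0)
        = ∫ s in Ioo 0 t, (t - s) ^ (α - 1) * caputoDeriv α y s := hval.symm
      _ ≤ ∫ s in Ioo 0 t, (t - s) ^ (α - 1) * b := by
        refine integral_mono_ae hint ((integrableOn_Ioo_sub_rpow hα0 0 t).mul_const b) ?_
        filter_upwards [hb, ae_restrict_mem measurableSet_Ioo] with s hs hmem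
        exact mul_le_mul_of_nonneg_left hs (Real.rpow_nonneg (sub_nonneg.2 hmem.2.le) _)
      _ = b * t ^ α / α := by
        rw [integral_mul_const, integral_Ioo_sub_rpow hα0 ht, sub_zero]
        ring
  rw [← div_div, le_div_iff₀ hΓ]
  linarith

end Caputo

theorem stmt7_general (α T b c₁ : ℝ) (hα0 : 0 < α) (hα1 : α < 1)
    (hb : 0 < b) (hc : 0 < c₁) (y : ℝ → ℝ)
    (hnn : ∀ t ∈ Set.Icc 0 T, 0 ≤ y t)
    (hAC : AbsContOn y 0 T)
    (hineq : ∀ᵐ t ∂(volume.restrict (Set.Icc 0 T)),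
      caputoDeriv α y t + c₁ * y t ≤ b) :
    ∀ t ∈ Set.Icc 0 T, y t ≤ y 0 + b * T ^ α / (α * Real.Gamma α) := by
  intro t ht
  have hsub : Ioo 0 t ⊆ Icc 0 T := Ioo_subset_Icc_self.trans (Icc_subset_Icc_right ht.2)
  have hD : ∀ᵐ s ∂volume.restrict (Ioo 0 t), caputoDeriv α y s ≤ b := by
    filter_upwards [ae_restrict_of_ae_restrict_of_subset hsub hineq,
      ae_restrict_mem measurableSet_Ioo] with s hs hmem
    linarith [mul_nonneg hc.le (hnn s (hsub hmem))]
  have hΓ : 0 < Real.Gamma α := Real.Gamma_pos_of_pos hα0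
  calc y t ≤ y 0 + b * t ^ α / (α * Real.Gamma α) := by
        linarith [sub_le_of_caputoDeriv_le hα0 hα1 ht.1 (hAC.mono_right ht.2) hD]
    _ ≤ y 0 + b * T ^ α / (α * Real.Gamma α) := by
        gcongr
        exacts [ht.1, ht.2]

theorem stmt7 (α T b c₁ : ℝ) (hα0 : 0 < α) (hα1 : α < 1) (hT : 0 < T)
    (hb : 0 < b) (hc : 0 < c₁) (y : ℝ → ℝ)
    (hnn : ∀ t ∈ Set.Icc 0 T, 0 ≤ y t)
    (hAC : AbsContOn y 0 T)
    (hineq : ∀ᵐ t ∂(volume.restrict (Set.Icc 0 T)),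
      caputoDeriv α y t + c₁ * y t ≤ b) :
    ∀ t ∈ Set.Icc 0 T, y t ≤ y 0 + b * T ^ α / (α * Real.Gamma α) :=
  stmt7_general α T b c₁ hα0 hα1 hb hc y hnn hAC hineq
end

section
/- Let N ≥ 3 be an integer, q > 1 and m > 1 - 2/N. Then there exists a constant S_N > 0 depending only on N such that for every nonnegative u ∈ L¹(ℝ^N) with u ∈ L^q(ℝ^N) and u^{(m+q-1)/2} ∈ H¹(ℝ^N), one has ( ‖u‖_{L^q}^q )^{1 + (m - 1 + 2/N)/(q - 1)} ≤ S_N^{-1} · ‖∇( u^{(q+m-1)/2} )‖_{L²}² · ‖u‖_{L¹}^{(2q/N + m - 1)/(q - 1)}. -/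
open Set Function Filter Topology MeasureTheory
open scoped ENNReal NNReal

local prefix:max "#" => Fintype.card

/-!
Put `v = u ^ ((q + m - 1) / 2)` and `2* = 2N / (N - 2)`. The Sobolev inequality
`‖v‖_{2*} ≤ C ‖∇v‖₂` with `C = 2 (N - 1) / (N - 2)` holds for compactly supported `v` by the
`L¹` Gagliardo–Nirenberg inequality applied to `|v| ^ C` followed by Cauchy–Schwarz, and extends
to `v ∈ L²` through the cutoffs `φ (x / k) • v` and Fatou's lemma. On the exponent scale of `v`,
`u ^ q = v ^ (2q / (q + m - 1))` lies between `u = v ^ (2 / (q + m - 1))` and `v ^ 2*`, so Hölder's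
inequality bounds `∫ u ^ q` by powers of `∫ u` and `‖v‖_{2*} ^ 2*`; the exponents in the
statement are exactly those for which the power of `‖∇v‖₂` comes out as `2`, and `S = C⁻²`.
-/

section GagliardoNirenberg

variable {F : Type*} [NormedAddCommGroup F] [NormedSpace ℝ F] [CompleteSpace F]

lemma HasCompactSupport.enorm_le_lintegral_Iic_deriv_of_differentiable {f : ℝ → F}
    (hf : Differentiable ℝ f) (h'f : HasCompactSupport f) (x : ℝ) :
    ‖f x‖ₑ ≤ ∫⁻ y in Iic x, ‖deriv f y‖ₑ := by
  by_cases hint : IntegrableOn (deriv f) (Iic x)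
  · have hlim : Tendsto f atBot (𝓝 0) := by
      rw [hasCompactSupport_iff_eventuallyEq, coclosedCompact_eq_cocompact] at h'f
      exact h'f.filter_mono atBot_le_cocompact |>.tendsto
    rw [← sub_zero (f x), ← integral_Iic_of_hasDerivAt_of_tendsto
      hf.continuous.continuousWithinAt (fun y _ ↦ (hf y).hasDerivAt) hint hlim]
    exact enorm_integral_le_lintegral_enorm _
  · have : ∫⁻ y in Iic x, ‖deriv f y‖ₑ = ∞ := by
      by_contra h
      exact hint ⟨aestronglyMeasurable_deriv f _, lt_top_iff_ne_top.2 h⟩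
    simp [this]

variable {ι : Type*} [Fintype ι]

lemma HasCompactSupport.enorm_le_lintegral_fderiv_update [DecidableEq ι] {u : (ι → ℝ) → F}
    (hu : Differentiable ℝ u) (h2u : HasCompactSupport u) (x : ι → ℝ) (i : ι) :
    ‖u x‖ₑ ≤ ∫⁻ xᵢ, ‖fderiv ℝ u (update x i xᵢ)‖ₑ := by
  calc ‖u x‖ₑ = ‖(u ∘ update x i) (x i)‖ₑ := by simp
    _ ≤ ∫⁻ xᵢ in Iic (x i), ‖deriv (u ∘ update x i) xᵢ‖ₑ :=
        HasCompactSupport.enorm_le_lintegral_Iic_deriv_of_differentiable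
          (hu.comp ((contDiff_update 1 x i).differentiable one_ne_zero))
          (h2u.comp_isClosedEmbedding (isClosedEmbedding_update x i)) _
    _ ≤ ∫⁻ xᵢ, ‖deriv (u ∘ update x i) xᵢ‖ₑ := setLIntegral_le_lintegral _ _
    _ ≤ ∫⁻ xᵢ, ‖fderiv ℝ u (update x i xᵢ)‖ₑ := by
        gcongr with y
        rw [fderiv_comp_deriv _ (hu _) (hasDerivAt_update x i y).differentiableAt]
        refine (ContinuousLinearMap.le_opENorm _ _).trans ?_
        simp [deriv_update, Pi.enorm_single]

-- Mathlib's `lintegral_pow_le_pow_lintegral_fderiv_aux` assumes `ContDiff ℝ 1 u`; the grid-lines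
-- argument needs only differentiability.
theorem lintegral_pow_le_pow_lintegral_fderiv_of_differentiable {p : ℝ}
    (hp : Real.HolderConjugate #ι p) {u : (ι → ℝ) → F} (hu : Differentiable ℝ u)
    (h2u : HasCompactSupport u) :
    ∫⁻ x, ‖u x‖ₑ ^ p ≤ (∫⁻ x, ‖fderiv ℝ u x‖ₑ) ^ p := by
  classical
  have : (1 : ℝ) ≤ #ι - 1 := by
    have : (2 : ℝ) ≤ #ι := by exact_mod_cast hp.lt
    linarith
  calc ∫⁻ x, ‖u x‖ₑ ^ p = ∫⁻ x, ∏ _i : ι, ‖u x‖ₑ ^ (1 / (#ι - 1 : ℝ)) := by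
        congr! 2 with x
        rw [Finset.prod_const, Finset.card_univ, ← ENNReal.rpow_natCast, ← ENNReal.rpow_mul,
          hp.conjugate_eq]
        field_simp
    _ ≤ ∫⁻ x, ∏ i, (∫⁻ xᵢ, ‖fderiv ℝ u (update x i xᵢ)‖ₑ) ^ (1 / (#ι - 1 : ℝ)) := by
        gcongr with x i
        exact h2u.enorm_le_lintegral_fderiv_update hu x i
    _ ≤ (∫⁻ x, ‖fderiv ℝ u x‖ₑ) ^ p :=
        lintegral_prod_lintegral_pow_le _ hp (by fun_prop)

end GagliardoNirenberg

section Cutoff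

variable {E : Type*} [NormedAddCommGroup E] [NormedSpace ℝ E] [FiniteDimensional ℝ E]
  (φ : ContDiffBump (0 : E))

-- Dilation by `k + 1` rather than `k`: with `(0 : ℝ)⁻¹ = 0` the `0`-th cutoff would be constant.
noncomputable def bumpCutoff (k : ℕ) (x : E) : ℝ := φ (((k : ℝ) + 1)⁻¹ • x)

lemma differentiable_bumpCutoff (k : ℕ) : Differentiable ℝ (bumpCutoff φ k) :=
  (φ.contDiff (n := 1)).differentiable one_ne_zero |>.comp (differentiable_id.const_smul _)

lemma hasCompactSupport_bumpCutoff (k : ℕ) : HasCompactSupport (bumpCutoff φ k) :=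
  φ.hasCompactSupport.comp_smul (by positivity)

lemma norm_bumpCutoff_le_one (k : ℕ) (x : E) : ‖bumpCutoff φ k x‖ ≤ 1 := by
  rw [bumpCutoff, Real.norm_of_nonneg φ.nonneg]
  exact φ.le_one

lemma eventually_bumpCutoff_eq_one (x : E) : ∀ᶠ k in atTop, bumpCutoff φ k x = 1 := by
  filter_upwards [eventually_ge_atTop ⌈‖x‖ / φ.rIn⌉₊] with k hk
  apply φ.one_of_mem_closedBall
  rw [mem_closedBall_zero_iff, norm_smul, norm_inv, Real.norm_of_nonneg (by positivity),
    inv_mul_le_iff₀ (by positivity)]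
  have := (div_le_iff₀ φ.rIn_pos).1 ((Nat.le_ceil _).trans (Nat.cast_le.2 hk))
  nlinarith [φ.rIn_pos]

lemma exists_norm_fderiv_bumpCutoff_le :
    ∃ K, ∀ k x, ‖fderiv ℝ (bumpCutoff φ k) x‖ ≤ K / ((k : ℝ) + 1) := by
  obtain ⟨K, hK⟩ := φ.hasCompactSupport.fderiv (𝕜 := ℝ) |>.exists_bound_of_continuous
    (φ.contDiff.continuous_fderiv one_ne_zero)
  refine ⟨K, fun k x ↦ ?_⟩
  unfold bumpCutoff
  rw [fderiv_comp_smul, norm_smul, norm_inv, Real.norm_of_nonneg (by positivity),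
    inv_mul_eq_div]
  exact div_le_div_of_nonneg_right (hK _) (by positivity)

end Cutoff

lemma norm_fderiv_smul_le_of_norm_le_one {X F : Type*} [NormedAddCommGroup X] [NormedSpace ℝ X]
    [NormedAddCommGroup F] [NormedSpace ℝ F] {χ : X → ℝ} {v : X → F} {x : X}
    (hχ : DifferentiableAt ℝ χ x) (hv : DifferentiableAt ℝ v x) (hχ₁ : ‖χ x‖ ≤ 1) :
    ‖fderiv ℝ (fun y ↦ χ y • v y) x‖ ≤ ‖fderiv ℝ v x‖ + ‖fderiv ℝ χ x‖ * ‖v x‖ := by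
  rw [fderiv_fun_smul hχ hv]
  refine (norm_add_le _ _).trans (add_le_add ?_ ?_)
  · rw [norm_smul]
    exact mul_le_of_le_one_left (norm_nonneg _) hχ₁
  · rw [ContinuousLinearMap.norm_smulRight_apply]

lemma eLpNorm_fderiv_smul_le {X F : Type*} [NormedAddCommGroup X] [NormedSpace ℝ X]
    [MeasurableSpace X] [OpensMeasurableSpace X] [NormedAddCommGroup F] [NormedSpace ℝ F]
    [CompleteSpace F] {μ : Measure X} {p : ℝ≥0∞} (hp : 1 ≤ p) {χ : X → ℝ} {v : X → F} {K : ℝ}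
    (hχ : Differentiable ℝ χ) (hv : Differentiable ℝ v) (hχ₁ : ∀ x, ‖χ x‖ ≤ 1)
    (hK : ∀ x, ‖fderiv ℝ χ x‖ ≤ K) :
    eLpNorm (fderiv ℝ (fun x ↦ χ x • v x)) p μ ≤
      eLpNorm (fderiv ℝ v) p μ + ENNReal.ofReal K * eLpNorm v p μ := by
  have hK₀ : 0 ≤ K := (norm_nonneg _).trans (hK 0)
  have hbound : eLpNorm (fderiv ℝ (fun x ↦ χ x • v x)) p μ ≤
      eLpNorm (fun x ↦ ‖fderiv ℝ v x‖ + K * ‖v x‖) p μ := by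
    refine eLpNorm_mono_real fun x ↦ ?_
    refine (norm_fderiv_smul_le_of_norm_le_one (hχ x) (hv x) (hχ₁ x)).trans ?_
    gcongr
    exact hK x
  refine hbound.trans <| (eLpNorm_add_le (measurable_fderiv ℝ v).norm.aestronglyMeasurable
    (hv.continuous.norm.const_mul _).aestronglyMeasurable hp).trans_eq ?_
  rw [eLpNorm_norm, show (fun x ↦ K * ‖v x‖) = K • fun x ↦ ‖v x‖ from rfl, eLpNorm_const_smul,
    eLpNorm_norm, Real.enorm_eq_ofReal hK₀]

lemma ENNReal.rpow_le_of_rpow_add_le_mul_rpow {V c : ℝ≥0∞} {e d : ℝ}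
    (hV₀ : V ≠ 0) (hV : V ≠ ∞) (h : V ^ (e + d) ≤ c * V ^ d) : V ^ e ≤ c := by
  rwa [ENNReal.rpow_add _ _ hV₀ hV, ENNReal.mul_le_mul_iff_left
    (ENNReal.rpow_pos (pos_iff_ne_zero.2 hV₀) hV).ne' (ENNReal.rpow_ne_top_of_ne_zero hV₀ hV)] at h

section Sobolev

variable {ι E : Type*} [Fintype ι] [NormedAddCommGroup E] [InnerProductSpace ℝ E] [CompleteSpace E]

lemma rpow_lintegral_rpow_le_of_hasCompactSupport (hι : 3 ≤ #ι) {g : (ι → ℝ) → E}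
    (hg : Differentiable ℝ g) (h2g : HasCompactSupport g) :
    (∫⁻ x, ‖g x‖ₑ ^ (2 * #ι / (#ι - 2) : ℝ)) ^ (1 / (2 * #ι / (#ι - 2)) + 1 / 2 : ℝ) ≤
      ENNReal.ofReal (2 * (#ι - 1) / (#ι - 2)) *
        ((∫⁻ x, ‖g x‖ₑ ^ (2 * #ι / (#ι - 2) : ℝ)) ^ (1 / 2 : ℝ) * eLpNorm (fderiv ℝ g) 2) := by
  borelize E
  have hn : (3 : ℝ) ≤ #ι := by exact_mod_cast hι
  set n : ℝ := (#ι : ℝ)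
  have hn₁ : n - 1 ≠ 0 := by linarith
  have hn₂ : n - 2 ≠ 0 := by linarith
  set b : ℝ := 2 * n / (n - 2)
  set V := ∫⁻ x, ‖g x‖ₑ ^ b
  -- `γ * (n / (n - 1)) = (γ - 1) * 2 = b`: both the Gagliardo–Nirenberg and the Cauchy–Schwarz
  -- step below return the integral `V` of `‖g‖ₑ ^ b`.
  set γ : ℝ≥0 := ⟨2 * (n - 1) / (n - 2), div_nonneg (by linarith) (by linarith)⟩
  have hγ : (γ : ℝ) = 2 * (n - 1) / (n - 2) := rfl
  have hγ₁ : 1 < (γ : ℝ) := by rw [hγ, one_lt_div (by linarith)]; linarith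
  have hn' : Real.HolderConjugate n (n / (n - 1)) :=
    Real.holderConjugate_iff.2 ⟨by linarith, by field_simp; ring⟩
  set w : (ι → ℝ) → ℝ := fun x ↦ ‖g x‖ ^ (γ : ℝ)
  have hw : ∫⁻ x, ‖w x‖ₑ ^ (n / (n - 1)) = V := by
    congr! 2 with x
    rw [Real.enorm_rpow_of_nonneg (norm_nonneg _) γ.coe_nonneg, enorm_norm, ← ENNReal.rpow_mul]
    congr 1
    rw [hγ]; simp only [b]; field_simp
  have hgm := hg.continuous.measurable
  rw [← hγ, ENNReal.ofReal_coe_nnreal]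
  calc V ^ (1 / b + 1 / 2) = (∫⁻ x, ‖w x‖ₑ ^ (n / (n - 1))) ^ (n / (n - 1))⁻¹ := by
        rw [hw]; congr 1; simp only [b]; field_simp; ring
    _ ≤ ∫⁻ x, ‖fderiv ℝ w x‖ₑ := by
        rw [ENNReal.rpow_inv_le_iff hn'.symm.pos]
        exact lintegral_pow_le_pow_lintegral_fderiv_of_differentiable hn'
          (hg.norm_rpow hγ₁) (h2g.norm.rpow_const (by linarith))
    _ ≤ ∫⁻ x, γ * (‖g x‖ₑ ^ ((γ : ℝ) - 1) * ‖fderiv ℝ g x‖ₑ) := by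
        gcongr with x
        rw [← mul_assoc]
        exact enorm_fderiv_norm_rpow_le hg hγ₁
    _ = γ * ∫⁻ x, ‖g x‖ₑ ^ ((γ : ℝ) - 1) * ‖fderiv ℝ g x‖ₑ :=
        lintegral_const_mul _ (by fun_prop)
    _ ≤ γ * (V ^ (1 / 2 : ℝ) * eLpNorm (fderiv ℝ g) 2 volume) := by
        have hDg : eLpNorm (fderiv ℝ g) 2 volume =
            (∫⁻ x, ‖fderiv ℝ g x‖ₑ ^ (2 : ℝ)) ^ (1 / 2 : ℝ) := by
          simpa using eLpNorm_eq_lintegral_rpow_enorm_toReal (f := fderiv ℝ g) (μ := volume)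
            two_ne_zero ENNReal.ofNat_ne_top
        rw [hDg]
        gcongr
        refine (ENNReal.lintegral_mul_le_Lp_mul_Lq volume Real.HolderConjugate.two_two
          (f := fun x ↦ ‖g x‖ₑ ^ ((γ : ℝ) - 1)) (g := fun x ↦ ‖fderiv ℝ g x‖ₑ)
          (by fun_prop) (by fun_prop)).trans_eq ?_
        congr 3 with x
        rw [← ENNReal.rpow_mul, hγ]
        congr 1
        simp only [b]; field_simp; ring

theorem eLpNorm_le_eLpNorm_fderiv_of_hasCompactSupport (hι : 3 ≤ #ι) {g : (ι → ℝ) → E}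
    (hg : Differentiable ℝ g) (h2g : HasCompactSupport g) :
    eLpNorm g (ENNReal.ofReal (2 * #ι / (#ι - 2))) ≤
      ENNReal.ofReal (2 * (#ι - 1) / (#ι - 2)) * eLpNorm (fderiv ℝ g) 2 := by
  have hb : (0 : ℝ) < 2 * #ι / (#ι - 2) := by
    have : (3 : ℝ) ≤ #ι := by exact_mod_cast hι
    exact div_pos (by linarith) (by linarith)
  set b : ℝ := 2 * #ι / (#ι - 2)
  set V := ∫⁻ x, ‖g x‖ₑ ^ b
  have hgV : eLpNorm g (ENNReal.ofReal b) = V ^ (1 / b) := by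
    rw [eLpNorm_eq_lintegral_rpow_enorm_toReal (by simpa using hb) ENNReal.ofReal_ne_top,
      ENNReal.toReal_ofReal hb.le]
  rw [hgV]
  rcases eq_or_ne V 0 with hV₀ | hV₀
  · rw [hV₀, ENNReal.zero_rpow_of_pos (by positivity)]
    exact zero_le
  have hV : V ≠ ∞ := fun hV ↦ by
    have := (hg.continuous.memLp_of_hasCompactSupport (μ := volume) (p := ENNReal.ofReal b)
      h2g).eLpNorm_lt_top
    rw [hgV, hV, ENNReal.top_rpow_of_pos (by positivity)] at this
    exact this.false
  exact ENNReal.rpow_le_of_rpow_add_le_mul_rpow hV₀ hV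
    ((rpow_lintegral_rpow_le_of_hasCompactSupport hι hg h2g).trans_eq (by ring))

theorem eLpNorm_le_eLpNorm_fderiv_of_memLp (hι : 3 ≤ #ι) {v : (ι → ℝ) → E}
    (hv : Differentiable ℝ v) (h2v : MemLp v 2) :
    eLpNorm v (ENNReal.ofReal (2 * #ι / (#ι - 2))) ≤
      ENNReal.ofReal (2 * (#ι - 1) / (#ι - 2)) * eLpNorm (fderiv ℝ v) 2 := by
  borelize E
  set φ : ContDiffBump (0 : ι → ℝ) := ⟨1, 2, one_pos, one_lt_two⟩
  obtain ⟨K, hK⟩ := exists_norm_fderiv_bumpCutoff_le φ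
  set g : ℕ → (ι → ℝ) → E := fun k x ↦ bumpCutoff φ k x • v x
  have hg (k : ℕ) : Differentiable ℝ (g k) := (differentiable_bumpCutoff φ k).smul hv
  have hDg (k : ℕ) := eLpNorm_fderiv_smul_le (μ := volume) one_le_two
    (differentiable_bumpCutoff φ k) hv (norm_bumpCutoff_le_one φ k) (hK k)
  have hg_lim : ∀ x, Tendsto (fun k ↦ g k x) atTop (𝓝 (v x)) := fun x ↦
    tendsto_const_nhds.congr' <| (eventually_bumpCutoff_eq_one φ x).mono fun k hk ↦ by
      simp [g, hk]
  have hbound_lim : Tendsto (fun k : ℕ ↦ ENNReal.ofReal (2 * (#ι - 1) / (#ι - 2)) *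
      (eLpNorm (fderiv ℝ v) 2 + ENNReal.ofReal (K / ((k : ℝ) + 1)) * eLpNorm v 2)) atTop
      (𝓝 (ENNReal.ofReal (2 * (#ι - 1) / (#ι - 2)) * eLpNorm (fderiv ℝ v) 2)) := by
    have hK_lim : Tendsto (fun k : ℕ ↦ K / ((k : ℝ) + 1)) atTop (𝓝 0) := by
      simpa [div_eq_mul_inv] using tendsto_one_div_add_atTop_nhds_zero_nat.const_mul K
    have := ENNReal.Tendsto.mul_const (ENNReal.tendsto_ofReal hK_lim) (Or.inr h2v.2.ne)
    simpa using
      ENNReal.Tendsto.const_mul (tendsto_const_nhds.add this) (Or.inr ENNReal.ofReal_ne_top)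
  calc eLpNorm v (ENNReal.ofReal (2 * #ι / (#ι - 2))) volume
      ≤ liminf (fun k ↦ eLpNorm (g k) (ENNReal.ofReal (2 * #ι / (#ι - 2))) volume) atTop :=
        Lp.eLpNorm_lim_le_liminf_eLpNorm (fun k ↦ (hg k).continuous.aestronglyMeasurable) v
          (ae_of_all _ hg_lim)
    _ ≤ liminf (fun k : ℕ ↦ ENNReal.ofReal (2 * (#ι - 1) / (#ι - 2)) *
          (eLpNorm (fderiv ℝ v) 2 volume + ENNReal.ofReal (K / ((k : ℝ) + 1)) * eLpNorm v 2 volume))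
          atTop :=
        liminf_le_liminf <| Eventually.of_forall fun k ↦
          (eLpNorm_le_eLpNorm_fderiv_of_hasCompactSupport hι (hg k)
            ((hasCompactSupport_bumpCutoff φ k).smul_right)).trans (by gcongr; exact hDg k)
    _ = _ := hbound_lim.liminf_eq

end Sobolev

theorem rpow_lintegral_rpow_le_of_lintegral_rpow_le {X : Type*} [MeasurableSpace X]
    {μ : Measure X} {W : X → ℝ≥0∞} (hW : AEMeasurable W μ) {a b s α β : ℝ} {c : ℝ≥0∞}
    (ha : 0 ≤ a) (hβ : 0 ≤ β) (hβα : β < α) (hs : α * s = β * a + (α - β) * b)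
    (hb : (α - β) * b = 2) (hV : ∫⁻ x, W x ^ b ∂μ ≤ c ^ b) :
    (∫⁻ x, W x ^ s ∂μ) ^ α ≤ c ^ 2 * (∫⁻ x, W x ^ a ∂μ) ^ β := by
  have hα : 0 < α := hβ.trans_lt hβα
  have hb₀ : 0 ≤ b := by nlinarith
  have hHolder : ∫⁻ x, W x ^ s ∂μ ≤
      (∫⁻ x, W x ^ a ∂μ) ^ (β / α) * (∫⁻ x, W x ^ b ∂μ) ^ ((α - β) / α) :=
    calc ∫⁻ x, W x ^ s ∂μ = ∫⁻ x, (W x ^ a) ^ (β / α) * (W x ^ b) ^ ((α - β) / α) ∂μ := by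
          congr 1 with x
          rw [← ENNReal.rpow_mul, ← ENNReal.rpow_mul, ← ENNReal.rpow_add_of_nonneg _ _
            (by positivity) (mul_nonneg hb₀ (div_nonneg (by linarith) hα.le))]
          congr 1
          field_simp
          linarith
      _ ≤ _ := ENNReal.lintegral_mul_norm_pow_le (hW.pow_const a) (hW.pow_const b)
          (by positivity) (div_nonneg (by linarith) hα.le) (by field_simp; ring)
  calc (∫⁻ x, W x ^ s ∂μ) ^ α
      ≤ ((∫⁻ x, W x ^ a ∂μ) ^ (β / α) * (∫⁻ x, W x ^ b ∂μ) ^ ((α - β) / α)) ^ α := by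
        gcongr
    _ = (∫⁻ x, W x ^ a ∂μ) ^ β * (∫⁻ x, W x ^ b ∂μ) ^ (α - β) := by
        rw [ENNReal.mul_rpow_of_nonneg _ _ hα.le, ← ENNReal.rpow_mul, ← ENNReal.rpow_mul,
          div_mul_cancel₀ _ hα.ne', div_mul_cancel₀ _ hα.ne']
    _ ≤ (∫⁻ x, W x ^ a ∂μ) ^ β * (c ^ b) ^ (α - β) := by gcongr
    _ = c ^ 2 * (∫⁻ x, W x ^ a ∂μ) ^ β := by
        rw [← ENNReal.rpow_mul, mul_comm b, hb, ENNReal.rpow_two, mul_comm]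

lemma integral_eq_toReal_lintegral_enorm {X : Type*} [MeasurableSpace X] {μ : Measure X}
    {f : X → ℝ} (hf₀ : ∀ x, 0 ≤ f x) (hf : AEStronglyMeasurable f μ) :
    ∫ x, f x ∂μ = (∫⁻ x, ‖f x‖ₑ ∂μ).toReal := by
  simp_rw [← integral_norm_eq_lintegral_enorm hf, Real.norm_of_nonneg (hf₀ _)]

lemma integral_norm_sq_eq_toReal_eLpNorm_sq {X F : Type*} [MeasurableSpace X] {μ : Measure X}
    [NormedAddCommGroup F] {f : X → F} (hf : AEStronglyMeasurable f μ) :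
    ∫ x, ‖f x‖ ^ 2 ∂μ = (eLpNorm f 2 μ ^ 2).toReal := by
  have := eLpNorm_nnreal_pow_eq_lintegral (f := f) (μ := μ) (p := 2) two_ne_zero
  norm_num at this
  rw [this, integral_eq_toReal_lintegral_enorm (f := fun x ↦ ‖f x‖ ^ 2) (fun _ ↦ by positivity)
    (hf.norm.pow 2)]
  simp_rw [enorm_pow, enorm_norm]

lemma two_mul_div_add_sub_one_div_nonneg {n q m : ℝ} (hn : 0 < n) (hq : 1 < q)
    (hm : 1 - 2 / n < m) : 0 ≤ (2 * q / n + m - 1) / (q - 1) := by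
  have : 2 / n < 2 * q / n := by gcongr; linarith
  exact div_nonneg (by linarith) (by linarith)

theorem rpow_lintegral_rpow_le_eLpNorm_fderiv_sq_mul {ι : Type*} [Fintype ι] (hι : 3 ≤ #ι)
    {q m : ℝ} (hq : 1 < q) (hm : 1 - 2 / #ι < m) {u : (ι → ℝ) → ℝ} (hu₀ : ∀ x, 0 ≤ u x)
    (hv : Differentiable ℝ fun x ↦ u x ^ ((q + m - 1) / 2))
    (h2v : MemLp (fun x ↦ u x ^ ((q + m - 1) / 2)) 2) :
    (∫⁻ x, ‖u x‖ₑ ^ q) ^ (1 + (m - 1 + 2 / #ι) / (q - 1)) ≤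
      (ENNReal.ofReal (2 * (#ι - 1) / (#ι - 2)) *
          eLpNorm (fderiv ℝ fun x ↦ u x ^ ((q + m - 1) / 2)) 2) ^ 2 *
        (∫⁻ x, ‖u x‖ₑ) ^ ((2 * q / #ι + m - 1) / (q - 1)) := by
  have hn : (3 : ℝ) ≤ #ι := by exact_mod_cast hι
  set n : ℝ := (#ι : ℝ)
  have hn₀ : n ≠ 0 := by positivity
  have hn₂ : n - 2 ≠ 0 := by linarith
  have hq₁ : q - 1 ≠ 0 := by linarith
  have h2n : 2 / n < 1 := by rw [div_lt_one (by linarith)]; linarith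
  set r := q + m - 1
  have hr : 0 < r := by linarith
  set v := fun x ↦ u x ^ (r / 2)
  set b : ℝ := 2 * n / (n - 2)
  have hb : 0 < b := div_pos (by linarith) (by linarith)
  set α : ℝ := 1 + (m - 1 + 2 / n) / (q - 1)
  set β : ℝ := (2 * q / n + m - 1) / (q - 1)
  have hβ : 0 ≤ β := two_mul_div_add_sub_one_div_nonneg (by positivity) hq hm
  have hαβ : α - β = 1 - 2 / n := by simp only [α, β]; field_simp; ring
  have hs : α * (2 * q / r) = β * (2 * 1 / r) + (α - β) * b := by
    have : q + m - 1 ≠ 0 := hr.ne'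
    simp only [α, β, b, r]; field_simp; ring
  have hb₂ : (α - β) * b = 2 := by rw [hαβ]; simp only [b]; field_simp
  have hsob := eLpNorm_le_eLpNorm_fderiv_of_memLp hι hv h2v
  rw [eLpNorm_eq_lintegral_rpow_enorm_toReal (by simpa using hb) ENNReal.ofReal_ne_top,
    ENNReal.toReal_ofReal hb.le, one_div, ENNReal.rpow_inv_le_iff hb] at hsob
  have hpow (x : ι → ℝ) {p : ℝ} (hp : 0 ≤ p) : ‖v x‖ₑ ^ (2 * p / r) = ‖u x‖ₑ ^ p := by
    rw [Real.enorm_rpow_of_nonneg (hu₀ x) (by positivity), ← ENNReal.rpow_mul]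
    congr 1; field_simp
  have key := rpow_lintegral_rpow_le_of_lintegral_rpow_le
    hv.continuous.measurable.enorm.aemeasurable (by positivity) hβ (by linarith) hs hb₂ hsob
  simpa only [hpow _ zero_le_one, hpow _ (by linarith : 0 ≤ q), ENNReal.rpow_one] using key

theorem stmt13 (N : ℕ) (hN : 3 ≤ N) :
    ∃ S : ℝ, 0 < S ∧ ∀ (q m : ℝ), 1 < q → 1 - 2 / (N : ℝ) < m →
      ∀ u : (Fin N → ℝ) → ℝ, (∀ x, 0 ≤ u x) →
      -- `u ∈ L¹(ℝᴺ)`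
      Integrable u →
      -- `u ∈ L^q(ℝᴺ)`
      Integrable (fun x => (u x) ^ q) →
      -- `u^{(q+m-1)/2} ∈ H¹(ℝᴺ)` (differentiable, in `L²`, with gradient in `L²`)
      Differentiable ℝ (fun x => (u x) ^ ((q + m - 1) / 2)) →
      Integrable (fun x => ((u x) ^ ((q + m - 1) / 2)) ^ 2) →
      Integrable (fun x => ‖fderiv ℝ (fun x => (u x) ^ ((q + m - 1) / 2)) x‖ ^ 2) →
      (∫ x, (u x) ^ q) ^ (1 + (m - 1 + 2 / (N : ℝ)) / (q - 1))
        ≤ S⁻¹ * (∫ x, ‖fderiv ℝ (fun x => (u x) ^ ((q + m - 1) / 2)) x‖ ^ 2)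
          * (∫ x, u x) ^ ((2 * q / (N : ℝ) + m - 1) / (q - 1)) := by
  have hn : (3 : ℝ) ≤ N := by exact_mod_cast hN
  set C : ℝ := 2 * (N - 1) / (N - 2)
  have hC : 0 < C := div_pos (by linarith) (by linarith)
  refine ⟨(C ^ 2)⁻¹, by positivity, fun q m hq hm u hu₀ hu hu_q hv hv_sq hDv_sq ↦ ?_⟩
  have key := rpow_lintegral_rpow_le_eLpNorm_fderiv_sq_mul (ι := Fin N) (by simpa using hN) hq
    (by simpa using hm) hu₀ hv
    ((memLp_two_iff_integrable_sq hv.continuous.aestronglyMeasurable).2 hv_sq)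
  simp only [Fintype.card_fin] at key
  have hDv : MemLp (fderiv ℝ fun x ↦ u x ^ ((q + m - 1) / 2)) 2 :=
    (memLp_two_iff_integrable_sq_norm (measurable_fderiv ℝ _).aestronglyMeasurable).2 hDv_sq
  rw [inv_inv, integral_eq_toReal_lintegral_enorm hu₀ hu.1,
    integral_norm_sq_eq_toReal_eLpNorm_sq hDv.1,
    integral_eq_toReal_lintegral_enorm (fun x ↦ Real.rpow_nonneg (hu₀ x) q) hu_q.1]
  simp_rw [Real.enorm_rpow_of_nonneg (hu₀ _) (by linarith : 0 ≤ q)]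
  rw [ENNReal.toReal_rpow, ENNReal.toReal_rpow]
  refine (ENNReal.toReal_mono ?_ key).trans_eq ?_
  · exact ENNReal.mul_ne_top (by finiteness [hDv.2.ne])
      (ENNReal.rpow_ne_top_of_nonneg (two_mul_div_add_sub_one_div_nonneg (by positivity) hq hm)
        hu.2.ne)
  · rw [mul_pow, ENNReal.toReal_mul, ENNReal.toReal_mul, ENNReal.toReal_pow,
      ENNReal.toReal_ofReal hC.le]
end
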